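/- Under the setting of the previous statement (with the choice $f_k=\Psi_\infty^x$ for $k\ge 2$), for every $N\ge 1$ one has the explicit bound $$J_N(f)\le \frac14\int_0^T\Big\|\dot f+\nabla V(f)+\Big(1-\frac1N\Big)\nabla F(f-\Psi_\infty^x)\Big\|^2 dt + \frac1{4N}\int_0^T\|\nabla F(\Psi_\infty^x - f)\|^2 dt.$$ -/

import Mathlib

/-!
Put the first particle on `f` and the other `N - 1` on the gradient flow `Ψ_∞^x`. A follower's
velocity cancels its own drift `∇V(Ψ_∞^x)`, and every self-interaction term is `∇F(0) = 0`
because `F` is even, so the leader pays the first integral and each follower pays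
`N⁻² ‖∇F(Ψ_∞^x - f)‖²`; finally `(N - 1) / N² ≤ 1 / N`.
-/

open MeasureTheory Finset Filter

/-- The projected mean-field rate function `J_N(f)`: infimum of the mean-field
rate function `I^N` over the companion paths `f_2, …, f_N` in `H_x`. Paths are
encoded together with their (square-integrable) derivatives via the integral
representation `g t = x + ∫_0^t g'`. -/
noncomputable def JNproj (d : ℕ) (T : ℝ) (x : EuclideanSpace ℝ (Fin d))
    (V F : EuclideanSpace ℝ (Fin d) → ℝ)
    (f f' : ℝ → EuclideanSpace ℝ (Fin d)) (N : ℕ) : ℝ :=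
  sInf { r : ℝ | ∃ g g' : Fin N → ℝ → EuclideanSpace ℝ (Fin d),
    (∀ i : Fin N, (i : ℕ) = 0 → (∀ t ∈ Set.Icc (0 : ℝ) T, g i t = f t ∧ g' i t = f' t)) ∧
    (∀ i, ∀ t ∈ Set.Icc (0 : ℝ) T, g i t = x + ∫ s in (0 : ℝ)..t, g' i s) ∧
    (∀ i, MemLp (g' i) 2 (volume.restrict (Set.Icc (0 : ℝ) T))) ∧
    r = (1 / 4) * ∑ i, ∫ t in (0 : ℝ)..T,
        ‖g' i t + gradient V (g i t)
          + (1 / (N : ℝ)) • ∑ k, gradient F (g i t - g k t)‖ ^ 2 }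

theorem fderiv_zero_of_even {E G : Type*} [NormedAddCommGroup E] [NormedSpace ℝ E]
    [NormedAddCommGroup G] [NormedSpace ℝ G] {F : E → G} (hF : ∀ z, F (-z) = F z) :
    fderiv ℝ F 0 = 0 := by
  have h := fderiv_comp_smul (𝕜 := ℝ) (f := F) (x := 0) (-1)
  simp only [neg_smul, one_smul, hF, smul_zero] at h
  have : (2 : ℝ) • fderiv ℝ F 0 = 0 := by
    rw [two_smul]; nth_rewrite 1 [h]; exact neg_add_cancel _
  exact (smul_eq_zero.mp this).resolve_left two_ne_zero

theorem gradient_zero_of_even {E : Type*} [NormedAddCommGroup E] [InnerProductSpace ℝ E]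
    [CompleteSpace E] {F : E → ℝ} (hF : ∀ z, F (-z) = F z) : gradient F 0 = 0 := by
  simp [gradient, fderiv_zero_of_even hF]

theorem ContinuousOn.memLp_restrict_of_isCompact {X E : Type*} [TopologicalSpace X]
    [MeasurableSpace X] [OpensMeasurableSpace X] [NormedAddCommGroup E] {μ : Measure X}
    [IsFiniteMeasureOnCompacts μ] {f : X → E} {s : Set X} (hf : ContinuousOn f s)
    (hs : IsCompact s) (hsm : MeasurableSet s) (p : ENNReal) : MemLp f p (μ.restrict s) := by
  have : IsFiniteMeasure (μ.restrict s) := isFiniteMeasure_restrict.2 hs.measure_lt_top.ne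
  obtain ⟨C, hC⟩ := hs.exists_bound_of_continuousOn hf
  exact MemLp.of_bound (hf.aestronglyMeasurable_of_isCompact hs hsm) C
    ((ae_restrict_iff' hsm).mpr (.of_forall hC))

theorem eq_add_integral_of_hasDerivAt_of_continuousOn {E : Type*} [NormedAddCommGroup E]
    [NormedSpace ℝ E] [CompleteSpace E] {Ψ ψ' : ℝ → E} {a b t : ℝ}
    (hΨ : ∀ s ∈ Set.Icc a b, HasDerivAt Ψ (ψ' s) s) (hψ' : ContinuousOn ψ' (Set.Icc a b))
    (ht : t ∈ Set.Icc a b) : Ψ t = Ψ a + ∫ s in a..t, ψ' s := by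
  have hsub : Set.uIcc a t ⊆ Set.Icc a b := by
    rw [Set.uIcc_of_le ht.1]; exact Set.Icc_subset_Icc le_rfl ht.2
  rw [intervalIntegral.integral_eq_sub_of_hasDerivAt (fun s hs => hΨ s (hsub hs))
    ((hψ'.mono hsub).intervalIntegrable)]
  abel

section FirstAndRest

variable {α β : Type*} {N : ℕ}

def firstAndRest (a b : α) : Fin N → α := fun i => if (i : ℕ) = 0 then a else b

theorem firstAndRest_of_val_eq_zero {a b : α} {i : Fin N} (hi : (i : ℕ) = 0) :
    firstAndRest a b i = a := if_pos hi

theorem firstAndRest_of_val_ne_zero {a b : α} {i : Fin N} (hi : (i : ℕ) ≠ 0) :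
    firstAndRest a b i = b := if_neg hi

theorem comp_firstAndRest (φ : α → β) (a b : α) (i : Fin N) :
    φ (firstAndRest a b i) = firstAndRest (φ a) (φ b) i :=
  apply_ite φ _ a b

theorem firstAndRest_apply {γ : Type*} (f g : γ → α) (i : Fin N) (t : γ) :
    firstAndRest f g i t = firstAndRest (f t) (g t) i :=
  comp_firstAndRest (fun h => h t) f g i

theorem sum_firstAndRest [NeZero N] {M : Type*} [AddCommGroup M] [Module ℝ M] (a b : M) :
    ∑ i : Fin N, firstAndRest a b i = a + ((N : ℝ) - 1) • b := by
  obtain ⟨n, rfl⟩ := Nat.exists_eq_succ_of_ne_zero (NeZero.ne N)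
  rw [Fin.sum_univ_succ, firstAndRest_of_val_eq_zero rfl]
  simp [firstAndRest_of_val_ne_zero, Nat.cast_smul_eq_nsmul]

theorem drift_firstAndRest [NeZero N] {E : Type*} [AddCommGroup E] [Module ℝ E]
    (W G : E → E) (hG : G 0 = 0) (a b a' : E) (i : Fin N) :
    firstAndRest a' (-W b) i + W (firstAndRest a b i)
        + (1 / (N : ℝ)) • ∑ k : Fin N, G (firstAndRest a b i - firstAndRest a b k)
      = firstAndRest (a' + W a + (1 - 1 / (N : ℝ)) • G (a - b)) ((1 / (N : ℝ)) • G (b - a)) i := by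
  have interaction (c : E) : ∑ k : Fin N, G (c - firstAndRest a b k)
      = G (c - a) + ((N : ℝ) - 1) • G (c - b) := by
    simp only [comp_firstAndRest (fun z => G (c - z)), sum_firstAndRest]
  by_cases hi : (i : ℕ) = 0
  · simp only [firstAndRest_of_val_eq_zero hi, interaction, sub_self, hG, zero_add, smul_smul]
    congr 3
    field_simp [Nat.cast_ne_zero.mpr (NeZero.ne N)]
  · simp only [firstAndRest_of_val_ne_zero hi, interaction, sub_self, hG, smul_zero, add_zero,
      neg_add_cancel, zero_add]

end FirstAndRest

theorem JNproj_le_of_admissible {d : ℕ} {T : ℝ} (hT : 0 ≤ T) {x : EuclideanSpace ℝ (Fin d)}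
    {V F : EuclideanSpace ℝ (Fin d) → ℝ} {f f' : ℝ → EuclideanSpace ℝ (Fin d)} {N : ℕ}
    (g g' : Fin N → ℝ → EuclideanSpace ℝ (Fin d))
    (hfirst : ∀ i : Fin N, (i : ℕ) = 0 → ∀ t ∈ Set.Icc (0 : ℝ) T, g i t = f t ∧ g' i t = f' t)
    (hrep : ∀ i, ∀ t ∈ Set.Icc (0 : ℝ) T, g i t = x + ∫ s in (0 : ℝ)..t, g' i s)
    (hL2 : ∀ i, MemLp (g' i) 2 (volume.restrict (Set.Icc (0 : ℝ) T))) :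
    JNproj d T x V F f f' N ≤ (1 / 4) * ∑ i, ∫ t in (0 : ℝ)..T,
        ‖g' i t + gradient V (g i t) + (1 / (N : ℝ)) • ∑ k, gradient F (g i t - g k t)‖ ^ 2 := by
  refine csInf_le ⟨0, ?_⟩ ⟨g, g', hfirst, hrep, hL2, rfl⟩
  rintro r ⟨G, G', -, -, -, rfl⟩
  exact mul_nonneg (by norm_num) (sum_nonneg fun i _ =>
    intervalIntegral.integral_nonneg hT fun t _ => by positivity)

theorem JNproj_le_firstAndRest {d : ℕ} {T : ℝ} (hT : 0 ≤ T) {x : EuclideanSpace ℝ (Fin d)}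
    {V F : EuclideanSpace ℝ (Fin d) → ℝ} {f f' Ψ ψ' : ℝ → EuclideanSpace ℝ (Fin d)} {N : ℕ}
    (hf : ∀ t ∈ Set.Icc (0 : ℝ) T, f t = x + ∫ s in (0 : ℝ)..t, f' s)
    (hfL2 : MemLp f' 2 (volume.restrict (Set.Icc (0 : ℝ) T))) (hΨ0 : Ψ 0 = x)
    (hΨ : ∀ t ∈ Set.Icc (0 : ℝ) T, HasDerivAt Ψ (ψ' t) t)
    (hψ' : ContinuousOn ψ' (Set.Icc (0 : ℝ) T)) :
    JNproj d T x V F f f' N ≤ (1 / 4) * ∑ i : Fin N, ∫ t in (0 : ℝ)..T,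
        ‖firstAndRest f' ψ' i t + gradient V (firstAndRest f Ψ i t)
          + (1 / (N : ℝ)) • ∑ k : Fin N,
              gradient F (firstAndRest f Ψ i t - firstAndRest f Ψ k t)‖ ^ 2 := by
  refine JNproj_le_of_admissible hT _ _
    (fun i hi t _ => by simp [firstAndRest_of_val_eq_zero hi]) (fun i t ht => ?_) fun i => ?_
  · by_cases hi : (i : ℕ) = 0
    · simpa [firstAndRest_of_val_eq_zero hi] using hf t ht
    · simp only [firstAndRest_of_val_ne_zero hi, ← hΨ0]
      exact eq_add_integral_of_hasDerivAt_of_continuousOn hΨ hψ' ht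
  · by_cases hi : (i : ℕ) = 0
    · simpa [firstAndRest_of_val_eq_zero hi] using hfL2
    · simpa [firstAndRest_of_val_ne_zero hi] using
        hψ'.memLp_restrict_of_isCompact isCompact_Icc measurableSet_Icc 2

theorem integral_rate_firstAndRest {E : Type*} [NormedAddCommGroup E] [InnerProductSpace ℝ E]
    [CompleteSpace E] {N : ℕ} [NeZero N] {V F : E → ℝ} (hF : ∀ z, F (-z) = F z)
    (f f' Ψ : ℝ → E) (T : ℝ) (i : Fin N) :
    ∫ t in (0 : ℝ)..T, ‖firstAndRest f' (fun s => -gradient V (Ψ s)) i t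
        + gradient V (firstAndRest f Ψ i t)
        + (1 / (N : ℝ)) • ∑ k : Fin N,
            gradient F (firstAndRest f Ψ i t - firstAndRest f Ψ k t)‖ ^ 2
      = firstAndRest
          (∫ t in (0 : ℝ)..T,
            ‖f' t + gradient V (f t) + (1 - 1 / (N : ℝ)) • gradient F (f t - Ψ t)‖ ^ 2)
          ((1 / (N : ℝ)) ^ 2 * ∫ t in (0 : ℝ)..T, ‖gradient F (Ψ t - f t)‖ ^ 2) i := by
  simp only [firstAndRest_apply, drift_firstAndRest _ _ (gradient_zero_of_even hF)]
  by_cases hi : (i : ℕ) = 0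
  · simp only [firstAndRest_of_val_eq_zero hi]
  · simp only [firstAndRest_of_val_ne_zero hi, norm_smul, Real.norm_eq_abs, sq_abs, mul_pow,
      intervalIntegral.integral_const_mul]

theorem pred_mul_one_div_sq_le_one_div {n : ℝ} (hn : 0 < n) :
    (n - 1) * (1 / n) ^ 2 ≤ 1 / n := by
  rw [div_pow, one_pow, mul_one_div, div_le_div_iff₀ (by positivity) hn]
  nlinarith

theorem JN_explicit_upper_bound_general
    (d : ℕ) (T : ℝ) (hT : 0 < T) (x : EuclideanSpace ℝ (Fin d))
    (V : EuclideanSpace ℝ (Fin d) → ℝ)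
    (KV : NNReal) (hVlip : LipschitzWith KV (gradient V))
    (F : EuclideanSpace ℝ (Fin d) → ℝ)
    (hFeven : ∀ z, F (-z) = F z)
    (f f' : ℝ → EuclideanSpace ℝ (Fin d))
    (hf : ∀ t ∈ Set.Icc (0 : ℝ) T, f t = x + ∫ s in (0 : ℝ)..t, f' s)
    (hfL2 : MemLp f' 2 (volume.restrict (Set.Icc (0 : ℝ) T)))
    (Ψinf : ℝ → EuclideanSpace ℝ (Fin d)) (hΨinf0 : Ψinf 0 = x)
    (hΨinf : ∀ t ∈ Set.Icc (0 : ℝ) T, HasDerivAt Ψinf (-(gradient V (Ψinf t))) t)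
    (N : ℕ) (hN : 1 ≤ N) :
    JNproj d T x V F f f' N
      ≤ (1 / 4) * (∫ t in (0 : ℝ)..T,
            ‖f' t + gradient V (f t)
              + (1 - 1 / (N : ℝ)) • gradient F (f t - Ψinf t)‖ ^ 2)
        + (1 / (4 * (N : ℝ))) * ∫ t in (0 : ℝ)..T,
            ‖gradient F (Ψinf t - f t)‖ ^ 2 := by
  have : NeZero N := ⟨by omega⟩
  have hψ' : ContinuousOn (fun t => -gradient V (Ψinf t)) (Set.Icc 0 T) :=
    (hVlip.continuous.comp_continuousOn fun t ht =>
      (hΨinf t ht).continuousAt.continuousWithinAt).neg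
  have hB : 0 ≤ ∫ t in (0 : ℝ)..T, ‖gradient F (Ψinf t - f t)‖ ^ 2 :=
    intervalIntegral.integral_nonneg hT.le fun t _ => by positivity
  have hweight := mul_le_mul_of_nonneg_right
    (pred_mul_one_div_sq_le_one_div (Nat.cast_pos.mpr (by omega : 0 < N))) hB
  calc JNproj d T x V F f f' N
      ≤ (1 / 4) * ∑ i : Fin N, ∫ t in (0 : ℝ)..T,
        ‖firstAndRest f' (fun s => -gradient V (Ψinf s)) i t
          + gradient V (firstAndRest f Ψinf i t)
          + (1 / (N : ℝ)) • ∑ k : Fin N,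
              gradient F (firstAndRest f Ψinf i t - firstAndRest f Ψinf k t)‖ ^ 2 :=
        JNproj_le_firstAndRest hT.le hf hfL2 hΨinf0 hΨinf hψ'
    _ = (1 / 4) * ((∫ t in (0 : ℝ)..T,
            ‖f' t + gradient V (f t) + (1 - 1 / (N : ℝ)) • gradient F (f t - Ψinf t)‖ ^ 2)
          + ((N : ℝ) - 1) * ((1 / (N : ℝ)) ^ 2
            * ∫ t in (0 : ℝ)..T, ‖gradient F (Ψinf t - f t)‖ ^ 2)) := by
        simp only [integral_rate_firstAndRest hFeven, sum_firstAndRest, smul_eq_mul]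
    _ ≤ _ := by
        rw [← one_div_mul_one_div]
        linear_combination (1 / 4 : ℝ) * hweight

theorem JN_explicit_upper_bound
    (d : ℕ) (T : ℝ) (hT : 0 < T) (x : EuclideanSpace ℝ (Fin d))
    (V : EuclideanSpace ℝ (Fin d) → ℝ) (hV : ContDiff ℝ 2 V)
    (KV : NNReal) (hVlip : LipschitzWith KV (gradient V))
    (F : EuclideanSpace ℝ (Fin d) → ℝ) (hF : ContDiff ℝ 2 F)
    (hFeven : ∀ z, F (-z) = F z) (hF0 : F 0 = 0)
    (KF : NNReal) (hFlip : LipschitzWith KF (gradient F))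
    (f f' : ℝ → EuclideanSpace ℝ (Fin d))
    (hf : ∀ t ∈ Set.Icc (0 : ℝ) T, f t = x + ∫ s in (0 : ℝ)..t, f' s)
    (hfL2 : MemLp f' 2 (volume.restrict (Set.Icc (0 : ℝ) T)))
    (Ψinf : ℝ → EuclideanSpace ℝ (Fin d)) (hΨinf0 : Ψinf 0 = x)
    (hΨinf : ∀ t ∈ Set.Icc (0 : ℝ) T, HasDerivAt Ψinf (-(gradient V (Ψinf t))) t)
    (N : ℕ) (hN : 1 ≤ N) :
    JNproj d T x V F f f' N
      ≤ (1 / 4) * (∫ t in (0 : ℝ)..T,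
            ‖f' t + gradient V (f t)
              + (1 - 1 / (N : ℝ)) • gradient F (f t - Ψinf t)‖ ^ 2)
        + (1 / (4 * (N : ℝ))) * ∫ t in (0 : ℝ)..T,
            ‖gradient F (Ψinf t - f t)‖ ^ 2 :=
  JN_explicit_upper_bound_general d T hT x V KV hVlip F hFeven f f' hf hfL2 Ψinf hΨinf0 hΨinf N hN
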